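/- arXiv:2308.15563 — 7 statements merged into one kernel-verified Lean document; each statement's English description precedes it below -/
import Mathlib

section
/- Let R be a commutative ring and t ∈ R. Let Γ be the subgroup of SL_3(R) generated by the three elementary matrices e_{12}(t), e_{23}(t), e_{31}(t). Then for every integer β ≥ 1: if β ≡ 1 (mod 3) then e_{12}(t^β), e_{23}(t^β), e_{31}(t^β) all belong to Γ; and if β ≡ 2 (mod 3) then e_{13}(t^β), e_{21}(t^β), e_{32}(t^β) all belong to Γ. -/
open Matrix

/-- The 3×3 elementary (transvection) matrix `e_{ij}(α) = I + α·E_{ij}`. -/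
def elemMat {R : Type*} [CommRing R] (i j : Fin 3) (α : R) : Matrix (Fin 3) (Fin 3) R :=
  1 + Matrix.single i j α

theorem elemMat_det {R : Type*} [CommRing R] (i j : Fin 3) (hij : i ≠ j) (α : R) :
    (elemMat i j α).det = 1 := by
  fin_cases i <;> fin_cases j <;>
    simp_all [elemMat, Matrix.det_fin_three, Matrix.single, Matrix.one_apply]

/-- The elementary matrix `e_{ij}(α)` as an element of `SL₃(R)` (for `i ≠ j`). -/
def elemSL {R : Type*} [CommRing R] (i j : Fin 3) (hij : i ≠ j) (α : R) :
    Matrix.SpecialLinearGroup (Fin 3) R :=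
  ⟨elemMat i j α, elemMat_det i j hij α⟩

/-- The subgroup of `SL₃(R)` generated by `e_{12}(t)`, `e_{23}(t)` and `e_{31}(t)`. -/
def elemSubgroup (R : Type*) [CommRing R] (t : R) :
    Subgroup (Matrix.SpecialLinearGroup (Fin 3) R) :=
  Subgroup.closure
    {elemSL 0 1 (by decide) t, elemSL 1 2 (by decide) t, elemSL 2 0 (by decide) t}

/-
For distinct `i, j, k`, the commutator of `e_{ij}(a)` and `e_{jk}(b)` is `e_{ik}(ab)`.
Hence if a subgroup contains the three cyclic transvections `e_{12}, e_{23}, e_{31}` at parameters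
`a` and `b`, it contains the three anticyclic ones `e_{13}, e_{21}, e_{32}` at `ab`, and vice versa.
Starting from the cyclic generators at `t`, this gives the anticyclic ones at `t²`, and then by
induction the cyclic ones at `t^(3m+1) = t^(3m-1) · t²` and the anticyclic ones at
`t^(3m+2) = t^(3m+1) · t`.
-/

open scoped commutatorElement

theorem elemMat_mul_elemMat {R : Type*} [CommRing R] {i j k : Fin 3} (hjk : j ≠ k) (hik : i ≠ k)
    (a b : R) :
    elemMat i j a * elemMat j k b = elemMat i k (a * b) * (elemMat j k b * elemMat i j a) := by
  simp only [elemMat, mul_add, add_mul, one_mul, mul_one, single_mul_single_same,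
    single_mul_single_of_ne i k j hjk.symm b (c := a * b),
    single_mul_single_of_ne i k i hik.symm a (c := a * b),
    single_mul_single_of_ne j k i hik.symm a (c := b), add_zero]
  abel

theorem elemSL_commutator {R : Type*} [CommRing R] {i j k : Fin 3} (hij : i ≠ j) (hjk : j ≠ k)
    (hik : i ≠ k) (a b : R) :
    ⁅elemSL i j hij a, elemSL j k hjk b⁆ = elemSL i k hik (a * b) := by
  have h : elemSL i j hij a * elemSL j k hjk b =
      elemSL i k hik (a * b) * (elemSL j k hjk b * elemSL i j hij a) :=
    Subtype.ext (elemMat_mul_elemMat hjk hik a b)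
  rw [commutatorElement_def, h]
  group

theorem elemSL_mem_of_mem {R : Type*} [CommRing R] {H : Subgroup (SpecialLinearGroup (Fin 3) R)}
    {i j k : Fin 3} (hij : i ≠ j) (hjk : j ≠ k) (hik : i ≠ k) {a b : R}
    (ha : elemSL i j hij a ∈ H) (hb : elemSL j k hjk b ∈ H) :
    elemSL i k hik (a * b) ∈ H := by
  rw [← elemSL_commutator hij hjk hik, commutatorElement_def]
  exact mul_mem (mul_mem (mul_mem ha hb) (inv_mem ha)) (inv_mem hb)

section Cyclic

variable {R : Type*} [CommRing R]

def CyclicElemsMem (H : Subgroup (SpecialLinearGroup (Fin 3) R)) (a : R) : Prop :=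
  elemSL 0 1 (by decide) a ∈ H ∧ elemSL 1 2 (by decide) a ∈ H ∧ elemSL 2 0 (by decide) a ∈ H

def AnticyclicElemsMem (H : Subgroup (SpecialLinearGroup (Fin 3) R)) (a : R) : Prop :=
  elemSL 0 2 (by decide) a ∈ H ∧ elemSL 1 0 (by decide) a ∈ H ∧ elemSL 2 1 (by decide) a ∈ H

variable {H : Subgroup (SpecialLinearGroup (Fin 3) R)} {a b : R}

theorem CyclicElemsMem.anticyclic_mul (ha : CyclicElemsMem H a) (hb : CyclicElemsMem H b) :
    AnticyclicElemsMem H (a * b) :=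
  ⟨elemSL_mem_of_mem _ _ _ ha.1 hb.2.1, elemSL_mem_of_mem _ _ _ ha.2.1 hb.2.2,
    elemSL_mem_of_mem _ _ _ ha.2.2 hb.1⟩

theorem AnticyclicElemsMem.cyclic_mul (ha : AnticyclicElemsMem H a)
    (hb : AnticyclicElemsMem H b) : CyclicElemsMem H (a * b) :=
  ⟨elemSL_mem_of_mem _ _ _ ha.1 hb.2.2, elemSL_mem_of_mem _ _ _ ha.2.1 hb.1,
    elemSL_mem_of_mem _ _ _ ha.2.2 hb.2.1⟩

theorem cyclicElemsMem_elemSubgroup (t : R) : CyclicElemsMem (elemSubgroup R t) t := by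
  refine ⟨?_, ?_, ?_⟩ <;> exact Subgroup.subset_closure (by simp)

theorem cyclicElemsMem_pow_three_mul_add_one_and_anticyclicElemsMem_pow_three_mul_add_two
    (t : R) (m : ℕ) :
    CyclicElemsMem (elemSubgroup R t) (t ^ (3 * m + 1)) ∧
      AnticyclicElemsMem (elemSubgroup R t) (t ^ (3 * m + 2)) := by
  have hgen := cyclicElemsMem_elemSubgroup t
  have hsq : AnticyclicElemsMem (elemSubgroup R t) (t ^ 2) := by
    simpa only [sq] using hgen.anticyclic_mul hgen
  induction m with
  | zero => simpa using ⟨hgen, hsq⟩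
  | succ m ih =>
    have hcyc : CyclicElemsMem (elemSubgroup R t) (t ^ (3 * (m + 1) + 1)) := by
      rw [show 3 * (m + 1) + 1 = 3 * m + 2 + 2 by ring, pow_add]
      exact ih.2.cyclic_mul hsq
    refine ⟨hcyc, ?_⟩
    rw [show 3 * (m + 1) + 2 = 3 * (m + 1) + 1 + 1 by ring, pow_succ]
    exact hcyc.anticyclic_mul hgen

end Cyclic

/-- For every integer `β ≥ 1`: if `β ≡ 1 (mod 3)`, then `e_{12}(t^β)`, `e_{23}(t^β)`,
`e_{31}(t^β)` all lie in the subgroup generated by `e_{12}(t)`, `e_{23}(t)`, `e_{31}(t)`;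
and if `β ≡ 2 (mod 3)`, then `e_{13}(t^β)`, `e_{21}(t^β)`, `e_{32}(t^β)` all lie in it. -/
theorem elem_pow_mem_elemSubgroup {R : Type*} [CommRing R] (t : R) (β : ℕ) :
    (β % 3 = 1 →
      elemSL 0 1 (by decide) (t ^ β) ∈ elemSubgroup R t ∧
      elemSL 1 2 (by decide) (t ^ β) ∈ elemSubgroup R t ∧
      elemSL 2 0 (by decide) (t ^ β) ∈ elemSubgroup R t) ∧
    (β % 3 = 2 →
      elemSL 0 2 (by decide) (t ^ β) ∈ elemSubgroup R t ∧
      elemSL 1 0 (by decide) (t ^ β) ∈ elemSubgroup R t ∧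
      elemSL 2 1 (by decide) (t ^ β) ∈ elemSubgroup R t) := by
  have hβ : β = 3 * (β / 3) + β % 3 := (Nat.div_add_mod β 3).symm
  obtain ⟨hcyc, hanti⟩ :=
    cyclicElemsMem_pow_three_mul_add_one_and_anticyclicElemsMem_pow_three_mul_add_two t (β / 3)
  refine ⟨fun h => ?_, fun h => ?_⟩ <;> rw [hβ, h]
  exacts [hcyc, hanti]
end

section
/- Let F be a finite field such that 3 does not divide |F| − 1, and let t be a generator of the multiplicative group F^×. Then the subgroup of SL_3(F) generated by the three elementary matrices e_{12}(t), e_{23}(t), e_{31}(t) is all of SL_3(F). -/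
/-!
The Steinberg relation `⁅e_ij(a), e_jk(b)⁆ = e_ik(ab)` for distinct `i, j, k` lets one add
exponents: from `e_01(t), e_12(t), e_20(t)` one gets `e_ij(t^m)` for every `m ≥ 1` with
`m ≡ j - i (mod 3)`. As `3 ∤ |Fˣ|`, cubing is a bijection of the cyclic group `Fˣ = ⟨t⟩`, so each
residue class `{t^(3n+r)}` is all of `Fˣ`; hence the subgroup contains every elementary matrix.
These generate `SL₃(F)`: Gaussian elimination leaves a diagonal matrix of determinant one, and
`diag(a, a⁻¹, 1)`, `diag(1, a, a⁻¹)` are products of elementary matrices by Whitehead's lemma.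
-/

open Matrix

open scoped commutatorElement

section Elementary

variable {R : Type*} [CommRing R] {i j k : Fin 3}

lemma elemSL_add (hij : i ≠ j) (α β : R) :
    elemSL i j hij (α + β) = elemSL i j hij α * elemSL i j hij β := by
  refine Subtype.ext (?_ : elemMat i j (α + β) = elemMat i j α * elemMat i j β)
  simp [elemMat, add_mul, mul_add, single_mul_single_of_ne _ _ _ _ hij.symm, single_add, add_assoc]

lemma elemSL_zero (hij : i ≠ j) : elemSL i j hij (0 : R) = 1 :=
  Subtype.ext (by simp [elemMat] : elemMat i j (0 : R) = 1)

lemma elemSL_neg (hij : i ≠ j) (α : R) : elemSL i j hij (-α) = (elemSL i j hij α)⁻¹ :=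
  eq_inv_of_mul_eq_one_left (by rw [← elemSL_add, neg_add_cancel, elemSL_zero])

lemma elemSL_mul_eq_commutator (hij : i ≠ j) (hjk : j ≠ k) (hik : i ≠ k) (α β : R) :
    elemSL i k hik (α * β) = ⁅elemSL i j hij α, elemSL j k hjk β⁆ := by
  rw [commutatorElement_def, ← elemSL_neg, ← elemSL_neg]
  refine Subtype.ext (?_ : elemMat i k (α * β) =
    elemMat i j α * elemMat j k β * elemMat i j (-α) * elemMat j k (-β))
  simp only [elemMat, add_mul, mul_add, one_mul, mul_one, single_mul_single_same,
    single_mul_single_of_ne _ _ _ _ hij.symm, single_mul_single_of_ne _ _ _ _ hjk.symm,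
    single_mul_single_of_ne _ _ _ _ hik.symm, add_zero, ← single_neg, neg_mul, mul_neg]
  abel

lemma elemSL_mul_mem {H : Subgroup (SpecialLinearGroup (Fin 3) R)} (hij : i ≠ j) (hjk : j ≠ k)
    (hik : i ≠ k) {α β : R} (hα : elemSL i j hij α ∈ H) (hβ : elemSL j k hjk β ∈ H) :
    elemSL i k hik (α * β) ∈ H := by
  rw [elemSL_mul_eq_commutator hij hjk hik, commutatorElement_def]
  exact mul_mem (mul_mem (mul_mem hα hβ) (inv_mem hα)) (inv_mem hβ)

end Elementary

lemma exists_eq_pow_mul_add {G : Type*} [Group G] [Finite G] {k : ℕ}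
    (hk : (Nat.card G).Coprime k) {t : G} (ht : Subgroup.zpowers t = ⊤) (u : G) (r : ℕ) :
    ∃ n : ℕ, u = t ^ (k * n + r) := by
  obtain ⟨w, hw⟩ := (powCoprime hk).surjective (u * (t ^ r)⁻¹)
  obtain ⟨n, rfl⟩ : w ∈ Submonoid.powers t :=
    mem_powers_iff_mem_zpowers.2 (ht ▸ Subgroup.mem_top w)
  refine ⟨n, ?_⟩
  rw [mul_inv_eq_iff_eq_mul.1 hw.symm, pow_add, pow_mul']
  rfl

/-- `(j - i).val` is `1` at the positions `(0,1), (1,2), (2,0)` of the generators and `2` at the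
others. -/
lemma elemSL_pow_mem {R : Type*} [CommRing R] {H : Subgroup (SpecialLinearGroup (Fin 3) R)}
    {t : R} (h01 : elemSL 0 1 (by decide) t ∈ H) (h12 : elemSL 1 2 (by decide) t ∈ H)
    (h20 : elemSL 2 0 (by decide) t ∈ H) {i j : Fin 3} (hij : i ≠ j) (n : ℕ) :
    elemSL i j hij (t ^ (3 * n + (j - i : Fin 3).val)) ∈ H := by
  have h02 : elemSL 0 2 (by decide) (t ^ 2) ∈ H := by
    rw [sq]; exact elemSL_mul_mem _ _ _ h01 h12
  have h10 : elemSL 1 0 (by decide) (t ^ 2) ∈ H := by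
    rw [sq]; exact elemSL_mul_mem _ _ _ h12 h20
  have h21 : elemSL 2 1 (by decide) (t ^ 2) ∈ H := by
    rw [sq]; exact elemSL_mul_mem _ _ _ h20 h01
  have key : ∀ m : ℕ,
      (elemSL 0 1 (by decide) (t ^ (3 * m + 1)) ∈ H ∧
        elemSL 1 2 (by decide) (t ^ (3 * m + 1)) ∈ H ∧
        elemSL 2 0 (by decide) (t ^ (3 * m + 1)) ∈ H) ∧
      (elemSL 0 2 (by decide) (t ^ (3 * m + 2)) ∈ H ∧
        elemSL 1 0 (by decide) (t ^ (3 * m + 2)) ∈ H ∧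
        elemSL 2 1 (by decide) (t ^ (3 * m + 2)) ∈ H) := by
    intro m
    induction m with
    | zero => simpa using ⟨⟨h01, h12, h20⟩, h02, h10, h21⟩
    | succ m ih =>
      obtain ⟨-, g02, g10, g21⟩ := ih
      have hpow : t ^ (3 * (m + 1) + 1) = t ^ (3 * m + 2) * t ^ 2 := by ring
      have f01 : elemSL 0 1 (by decide) (t ^ (3 * (m + 1) + 1)) ∈ H := by
        rw [hpow]; exact elemSL_mul_mem _ _ _ g02 h21
      have f12 : elemSL 1 2 (by decide) (t ^ (3 * (m + 1) + 1)) ∈ H := by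
        rw [hpow]; exact elemSL_mul_mem _ _ _ g10 h02
      have f20 : elemSL 2 0 (by decide) (t ^ (3 * (m + 1) + 1)) ∈ H := by
        rw [hpow]; exact elemSL_mul_mem _ _ _ g21 h10
      refine ⟨⟨f01, f12, f20⟩, ?_, ?_, ?_⟩ <;> rw [pow_succ]
      · exact elemSL_mul_mem _ _ _ f01 h12
      · exact elemSL_mul_mem _ _ _ f12 h20
      · exact elemSL_mul_mem _ _ _ f20 h01
  obtain ⟨⟨f01, f12, f20⟩, b02, b10, b21⟩ := key n
  fin_cases i <;> fin_cases j <;> first | exact absurd rfl hij | assumption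

section Field

variable {K : Type*} [Field K] {H : Subgroup (SpecialLinearGroup (Fin 3) K)}

/-- Whitehead: `h(a) = w(a) w(-1)` with `w(a) = e_ij(a) e_ji(-a⁻¹) e_ij(a)`. -/
lemma diagonal_mulSingle_mul_mulSingle_inv {i j : Fin 3} (hij : i ≠ j) {a : K} (ha : a ≠ 0) :
    diagonal (Pi.mulSingle i a * Pi.mulSingle j a⁻¹) =
      elemMat i j a * elemMat j i (-a⁻¹) * elemMat i j a *
        (elemMat i j (-1) * elemMat j i 1 * elemMat i j (-1)) := by
  fin_cases i <;> fin_cases j <;> (try exact absurd rfl hij) <;>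
    simp [elemMat, eta_fin_three (single _ _ _), one_fin_three, diagonal_fin_three, ha,
      Pi.mulSingle, Function.update]

lemma exists_mem_coe_eq_diagonal_mulSingle (hH : ∀ i j hij α, elemSL i j hij α ∈ H) {i j : Fin 3}
    (hij : i ≠ j) {a : K} (ha : a ≠ 0) :
    ∃ A ∈ H, (A : Matrix (Fin 3) (Fin 3) K) = diagonal (Pi.mulSingle i a * Pi.mulSingle j a⁻¹) :=
  ⟨_, mul_mem (mul_mem (mul_mem (hH i j hij a) (hH j i hij.symm _)) (hH i j hij a))
      (mul_mem (mul_mem (hH i j hij _) (hH j i hij.symm 1)) (hH i j hij _)),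
    (diagonal_mulSingle_mul_mulSingle_inv hij ha).symm⟩

lemma exists_mem_coe_eq_diagonal (hH : ∀ i j hij α, elemSL i j hij α ∈ H) {D : Fin 3 → K}
    (hD : (diagonal D).det = 1) : ∃ A ∈ H, (A : Matrix (Fin 3) (Fin 3) K) = diagonal D := by
  rw [det_diagonal, Fin.prod_univ_three] at hD
  have h0 : D 0 ≠ 0 := left_ne_zero_of_mul (left_ne_zero_of_mul_eq_one hD)
  have h1 : D 1 ≠ 0 := right_ne_zero_of_mul (left_ne_zero_of_mul_eq_one hD)
  obtain ⟨A, hA, hA'⟩ := exists_mem_coe_eq_diagonal_mulSingle hH (i := 0) (j := 1) (by decide) h0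
  obtain ⟨B, hB, hB'⟩ :=
    exists_mem_coe_eq_diagonal_mulSingle hH (i := 1) (j := 2) (by decide) (mul_ne_zero h0 h1)
  refine ⟨A * B, mul_mem hA hB, ?_⟩
  change (A : Matrix (Fin 3) (Fin 3) K) * B = _
  rw [hA', hB', diagonal_mul_diagonal]
  congr 1
  ext k
  fin_cases k <;> simp [Pi.mulSingle, Function.update, h0, eq_inv_of_mul_eq_one_right hD]

lemma eq_top_of_forall_elemSL_mem (hH : ∀ i j hij α, elemSL i j hij α ∈ H) : H = ⊤ := by
  refine eq_top_iff.2 fun M _ => ?_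
  obtain ⟨A, hA, hAM⟩ : ∃ A ∈ H, (A : Matrix (Fin 3) (Fin 3) K) = M := by
    refine diagonal_transvection_induction (fun N => ∃ A ∈ H, (A : Matrix _ _ K) = N) M
      (fun D hD => exists_mem_coe_eq_diagonal hH (hD.trans M.prop)) (fun e => ?_) ?_
    · exact ⟨elemSL e.i e.j e.hij e.c, hH _ _ _ _, rfl⟩
    · rintro _ _ ⟨A, hA, rfl⟩ ⟨B, hB, rfl⟩
      exact ⟨A * B, mul_mem hA hB, rfl⟩
  exact Subtype.ext hAM ▸ hA

end Field

/-- If `F` is a finite field with `3 ∤ |F| − 1` and `t` generates the multiplicative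
group `Fˣ`, then `e_{12}(t)`, `e_{23}(t)` and `e_{31}(t)` generate all of `SL₃(F)`. -/
theorem elem_generate_SL3 {F : Type*} [Field F] [Fintype F]
    (h3 : ¬ (3 ∣ Fintype.card F - 1)) (t : Fˣ) (ht : Subgroup.zpowers t = ⊤) :
    Subgroup.closure
        ({elemSL 0 1 (by decide) (t : F), elemSL 1 2 (by decide) (t : F),
          elemSL 2 0 (by decide) (t : F)} :
          Set (Matrix.SpecialLinearGroup (Fin 3) F)) = ⊤ := by
  have hcop : (Nat.card Fˣ).Coprime 3 := by
    rw [Nat.card_units, Nat.card_eq_fintype_card]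
    exact ((Nat.Prime.coprime_iff_not_dvd Nat.prime_three).2 h3).symm
  refine eq_top_of_forall_elemSL_mem fun i j hij α => ?_
  obtain rfl | hα := eq_or_ne α 0
  · rw [elemSL_zero]
    exact one_mem _
  obtain ⟨n, hn⟩ := exists_eq_pow_mul_add hcop ht (Units.mk0 α hα) (j - i : Fin 3).val
  rw [show α = (t : F) ^ (3 * n + (j - i : Fin 3).val) by simpa using congrArg Units.val hn]
  exact elemSL_pow_mem (Subgroup.subset_closure (by simp)) (Subgroup.subset_closure (by simp))
    (Subgroup.subset_closure (by simp)) hij n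
end

section
/- Let q be a prime power and let 𝔽_q be the finite field with q elements. Define the real matrix B indexed by (𝔽_q × 𝔽_q) × (𝔽_q × 𝔽_q) by B((b,c),(α,γ)) = 1 if c = α·b + γ and B((b,c),(α,γ)) = 0 otherwise. Then the matrix B·Bᵀ satisfies: (B·Bᵀ)((b,c),(b',c')) = q if (b,c) = (b',c'); = 1 if b ≠ b'; and = 0 if b = b' but c ≠ c'. -/
open Matrix

/-- The biadjacency matrix of the link graph: both sides are indexed by `F × F`, and the
left vertex `(b, c)` is adjacent to the right vertex `(α, γ)` iff `c = α·b + γ`. -/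
def linkB (F : Type*) [Field F] [DecidableEq F] : Matrix (F × F) (F × F) ℝ :=
  Matrix.of fun p r => if p.2 = r.1 * p.1 + r.2 then 1 else 0

lemma linkB_key (F : Type*) [Field F] [Fintype F] [DecidableEq F] (b c b' c' : F) :
    (linkB F * (linkB F)ᵀ) (b, c) (b', c') =
      ∑ α : F, if c' = α * b' + (c - α * b) then (1 : ℝ) else 0 := by
  rw [Matrix.mul_apply, Fintype.sum_prod_type]
  refine Finset.sum_congr rfl fun α _ => ?_
  rw [Finset.sum_eq_single (c - α * b)]
  · simp [linkB]
  · intro γ _ hγ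
    simp only [linkB, transpose_apply, of_apply]
    rw [if_neg, zero_mul]
    intro h
    exact hγ (by linear_combination -h)
  · simp

/-- The entries of `B·Bᵀ` for the link biadjacency matrix `B`:
`q` on the diagonal, `1` when `b ≠ b'`, and `0` when `b = b'` but `c ≠ c'`. -/
theorem linkB_mul_transpose_apply (F : Type*) [Field F] [Fintype F] [DecidableEq F]
    (b c b' c' : F) :
    ((b, c) = (b', c') → (linkB F * (linkB F)ᵀ) (b, c) (b', c') = (Fintype.card F : ℝ)) ∧
    (b ≠ b' → (linkB F * (linkB F)ᵀ) (b, c) (b', c') = 1) ∧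
    (b = b' → c ≠ c' → (linkB F * (linkB F)ᵀ) (b, c) (b', c') = 0) := by
  refine ⟨?_, ?_, ?_⟩
  · rintro h
    obtain ⟨rfl, rfl⟩ := Prod.mk.injEq .. ▸ h
    rw [linkB_key]
    simp [Finset.card_univ]
  · intro hb
    rw [linkB_key]
    have hsub : b' - b ≠ 0 := sub_ne_zero.2 (Ne.symm hb)
    rw [Finset.sum_eq_single ((c' - c) / (b' - b))]
    · rw [if_pos]
      field_simp
      ring
    · intro α _ hα
      rw [if_neg]
      intro h
      apply hα
      field_simp
      linear_combination -h
    · simp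
  · rintro rfl hc
    rw [linkB_key]
    apply Finset.sum_eq_zero
    intro α _
    rw [if_neg]
    intro h
    exact hc (by linear_combination -h)
end

section
/- Let q be a prime power and let B be the real matrix indexed by (𝔽_q × 𝔽_q) × (𝔽_q × 𝔽_q) with B((b,c),(α,γ)) = 1 if c = α·b + γ and 0 otherwise. Then: (i) the all-ones vector is an eigenvector of B·Bᵀ with eigenvalue q²; and (ii) for every function f : 𝔽_q × 𝔽_q → ℝ with ∑_{(b,c)} f(b,c) = 0, one has fᵀ(B·Bᵀ)f ≤ q · ∑_{(b,c)} f(b,c)². In particular, the largest eigenvalue of B·Bᵀ is q² and every other eigenvalue is at most q (equivalently, the second largest eigenvalue of the normalized adjacency matrix of the associated q-regular bipartite link graph is 1/√q). -/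
open Matrix Finset

/-!
Two distinct points `(b, c)`, `(b', c')` of `F × F` have a common neighbour `(α, γ)` exactly
when `α (b' - b) = c' - c`: there is one common neighbour if `b ≠ b'` and none otherwise, while
each point has `q` neighbours. Hence `B Bᵀ = q I + J - (I ⊗ J)`, where `J` is an all-ones matrix.
On vectors orthogonal to the all-ones vector the `J` term vanishes and `I ⊗ J` is positive
semidefinite, which leaves the bound `q ‖f‖²`.
-/

theorem sum_ite_mul_eq {K : Type*} [Field K] [Fintype K] [DecidableEq K] (x y : K) :
    ∑ α : K, (if α * x = y then (1 : ℝ) else 0) =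
      Fintype.card K * (if x = 0 ∧ y = 0 then 1 else 0) + 1 - (if x = 0 then 1 else 0) := by
  by_cases hx : x = 0
  · subst hx
    by_cases hy : y = 0 <;> simp [hy, eq_comm]
  · simp [← eq_div_iff hx, hx]

theorem sum_mul_sum_snd_eq_sum_sq {α β : Type*} [Fintype α] [Fintype β] (f : α × β → ℝ) :
    ∑ p, f p * ∑ c, f (p.1, c) = ∑ b, (∑ c, f (b, c)) ^ 2 := by
  simp only [Fintype.sum_prod_type, ← Finset.sum_mul, sq]

section

variable {F : Type*} [Field F] [Fintype F] [DecidableEq F]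

theorem linkB_mul_transpose_apply_s5 (p r : F × F) :
    (linkB F * (linkB F)ᵀ) p r =
      Fintype.card F * (if p = r then 1 else 0) + 1 - (if p.1 = r.1 then 1 else 0) := by
  have common_neighbours (α : F) :
      ∑ γ : F, (if p.2 = α * p.1 + γ then (1 : ℝ) else 0) * (if r.2 = α * r.1 + γ then 1 else 0)
        = if α * (r.1 - p.1) = r.2 - p.2 then 1 else 0 := by
    have hγ (γ : F) : p.2 = α * p.1 + γ ↔ p.2 - α * p.1 = γ := by
      constructor <;> intro h <;> linear_combination h
    simp only [hγ, ite_mul, one_mul, zero_mul, sum_ite_eq, mem_univ, if_true]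
    congr 1
    exact propext ⟨fun h => by linear_combination -h, fun h => by linear_combination -h⟩
  rw [mul_apply, Fintype.sum_prod_type]
  simp only [linkB, transpose_apply, of_apply, common_neighbours, sum_ite_mul_eq, sub_eq_zero]
  simp only [Prod.ext_iff, eq_comm]

theorem linkB_mul_transpose_mulVec (f : F × F → ℝ) :
    (linkB F * (linkB F)ᵀ) *ᵥ f = fun p => Fintype.card F * f p + ∑ x, f x - ∑ c, f (p.1, c) := by
  funext p
  have fiber : ∑ r : F × F, (if p.1 = r.1 then f r else 0) = ∑ c, f (p.1, c) := by
    rw [Fintype.sum_prod_type]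
    exact (sum_congr rfl fun _ _ => sum_ite_irrel _ _ _ _).trans (by simp)
  simp only [mulVec, dotProduct, linkB_mul_transpose_apply_s5, sub_mul, add_mul, one_mul,
    sum_sub_distrib, sum_add_distrib, mul_assoc, ← mul_sum, ite_mul, zero_mul, sum_ite_eq,
    mem_univ, if_true]
  rw [fiber]

theorem linkB_mul_transpose_quadratic_form (f : F × F → ℝ) :
    f ⬝ᵥ ((linkB F * (linkB F)ᵀ) *ᵥ f) =
      Fintype.card F * ∑ x, f x ^ 2 + (∑ x, f x) ^ 2 - ∑ b, (∑ c, f (b, c)) ^ 2 := by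
  simp only [linkB_mul_transpose_mulVec, dotProduct, mul_sub, mul_add, sum_sub_distrib,
    sum_add_distrib, sum_mul_sum_snd_eq_sum_sq, ← sum_mul]
  rw [← sq, mul_sum]
  congr 2
  exact sum_congr rfl fun _ _ => by ring

end

/-- Spectral gap of the link: the all-ones vector is an eigenvector of `B·Bᵀ` with
eigenvalue `q²`, and on the orthogonal complement of the all-ones vector the quadratic
form of `B·Bᵀ` is at most `q·‖f‖²` (so all other eigenvalues are at most `q`;
equivalently, the second largest normalized eigenvalue of the link is `1/√q`). -/
theorem linkB_spectral_gap (F : Type*) [Field F] [Fintype F] [DecidableEq F] :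
    ((linkB F * (linkB F)ᵀ) *ᵥ (fun _ => (1 : ℝ)) =
      fun _ => ((Fintype.card F : ℝ)) ^ 2) ∧
    (∀ f : F × F → ℝ, (∑ x, f x) = 0 →
      f ⬝ᵥ ((linkB F * (linkB F)ᵀ) *ᵥ f) ≤ (Fintype.card F : ℝ) * ∑ x, (f x) ^ 2) := by
  refine ⟨?_, fun f hf => ?_⟩
  · simp only [linkB_mul_transpose_mulVec, sum_const, card_univ, Fintype.card_prod, nsmul_eq_mul,
      mul_one, Nat.cast_mul]
    funext
    ring
  · rw [linkB_mul_transpose_quadratic_form, hf]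
    have : 0 ≤ ∑ b, (∑ c, f (b, c)) ^ 2 := sum_nonneg fun _ _ => sq_nonneg _
    linarith
end

section
/- Let p be a prime and let r, k, m be natural numbers with r ≤ k ≤ m < p. Then the (r+1)×(r+1) matrix over 𝔽_p whose entry in row i and column j (for 0 ≤ i, j ≤ r) is the binomial coefficient C(m−i, k−j) reduced modulo p, is invertible over 𝔽_p. -/
/-!
Reversing rows and columns turns the matrix into `(C(b+c+i, b+j))` with `b = k - r`, `c = m - k`.
Scaling row `i` by `(c+i)!` and column `j` by `(b+j)!` turns the entries into
`(b+c+i)! * (c+i)(c+i-1)⋯(c+i-j+1)`, i.e. multiples of the monic degree-`j` polynomials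
`descPochhammer j` evaluated at `c+i`; so the determinant is a product of factorials times the
Vandermonde determinant of `c, …, c+r`. As `m < p`, no factor vanishes modulo `p`.
-/

open Nat Matrix Polynomial

theorem Nat.factorial_mul_factorial_mul_choose_add (b c j : ℕ) :
    c ! * ((b + j)! * (b + c).choose (b + j)) = c.descFactorial j * (b + c)! := by
  have hsplit : (b + c).descFactorial (b + j) = c.descFactorial j * (b + c).descFactorial b := by
    simpa using (descFactorial_mul_descFactorial (n := b + c) (Nat.le_add_right b j)).symm
  have hfac : c ! * (b + c).descFactorial b = (b + c)! := by
    simpa using factorial_mul_descFactorial (Nat.le_add_right b c)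
  rw [← descFactorial_eq_factorial_mul_choose, hsplit, mul_left_comm, hfac]

theorem Matrix.prod_factorial_mul_det_choose (R : Type*) [CommRing R] [IsDomain R] (n b c : ℕ) :
    (∏ i : Fin n, ((c + i)! : R)) * ((∏ j : Fin n, ((b + j)! : R)) *
      (of fun i j : Fin n => ((b + c + i).choose (b + j) : R)).det) =
      (∏ i : Fin n, ((b + c + i)! : R)) *
        (vandermonde fun i : Fin n => ((c + i : ℕ) : R)).det := by
  have hentry (i j : Fin n) :
      ((c + i)! : R) * (((b + j)! : R) * ((b + c + i).choose (b + j) : R)) =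
        ((b + c + i)! : R) * (descPochhammer R j).eval ((c + i : ℕ) : R) := by
    have h := Nat.factorial_mul_factorial_mul_choose_add b (c + i) j
    rw [← add_assoc] at h
    rw [descPochhammer_eval_eq_descFactorial]
    simpa only [Nat.cast_mul] using congrArg (Nat.cast : ℕ → R) (h.trans (mul_comm _ _))
  rw [← det_mul_row, ← det_mul_column, det_eval_matrixOfPolynomials_eq_det_vandermonde _
    (fun j : Fin n => descPochhammer R j) (fun j => descPochhammer_natDegree R j)
    (fun j => monic_descPochhammer R j), ← det_mul_column]
  congr 1
  ext i j
  exact hentry i j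

theorem ZMod.natCast_factorial_ne_zero {p n : ℕ} [Fact p.Prime] (h : n < p) :
    (n ! : ZMod p) ≠ 0 := by
  rw [Ne, ZMod.natCast_eq_zero_iff, (Fact.out : p.Prime).dvd_factorial]
  omega

theorem ZMod.det_vandermonde_natCast_add_ne_zero {p n : ℕ} [Fact p.Prime] (c : ℕ)
    (h : c + n ≤ p) :
    (vandermonde fun i : Fin n => ((c + i : ℕ) : ZMod p)).det ≠ 0 := by
  rw [det_vandermonde_ne_zero_iff]
  intro i j hij
  rw [ZMod.natCast_eq_natCast_iff', Nat.mod_eq_of_lt (by omega), Nat.mod_eq_of_lt (by omega)] at hij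
  exact Fin.ext (by omega)

/-- The `(r+1)×(r+1)` matrix of binomial coefficients `C(m−i, k−j)` (for `0 ≤ i, j ≤ r`)
reduced modulo a prime `p` is invertible over `𝔽_p`, provided `r ≤ k ≤ m < p`. -/
theorem binomial_matrix_invertible (p : ℕ) [Fact p.Prime] (r k m : ℕ)
    (hrk : r ≤ k) (hkm : k ≤ m) (hmp : m < p) :
    IsUnit (Matrix.det
      (Matrix.of fun i j : Fin (r + 1) =>
        ((Nat.choose (m - (i : ℕ)) (k - (j : ℕ)) : ℕ) : ZMod p))) := by
  set b := k - r
  set c := m - k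
  have hrev :
      (of fun i j : Fin (r + 1) => ((Nat.choose (m - (i : ℕ)) (k - (j : ℕ)) : ℕ) : ZMod p)) =
      (of fun i j : Fin (r + 1) => ((b + c + i).choose (b + j) : ZMod p)).submatrix
        Fin.revPerm Fin.revPerm := by
    ext i j
    simp only [submatrix_apply, of_apply, Fin.revPerm_apply, Fin.val_rev]
    congr 3 <;> omega
  have hid := prod_factorial_mul_det_choose (ZMod p) (r + 1) b c
  have hrhs : (∏ i : Fin (r + 1), ((b + c + i)! : ZMod p)) *
      (vandermonde fun i : Fin (r + 1) => ((c + i : ℕ) : ZMod p)).det ≠ 0 :=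
    mul_ne_zero (Finset.prod_ne_zero_iff.mpr fun i _ => ZMod.natCast_factorial_ne_zero (by omega))
      (ZMod.det_vandermonde_natCast_add_ne_zero c (by omega))
  rw [hrev, det_submatrix_equiv_self, isUnit_iff_ne_zero]
  exact right_ne_zero_of_mul (right_ne_zero_of_mul (hid ▸ hrhs))
end

section
/- Let p be a prime and e a natural number with p ≥ 2e + 2. Then for every subset S ⊆ 𝔽_p³ with |S| < (e+1)³ there exists a nonzero function E ∈ C_{e,e} such that E(s) = 0 for every s ∈ S. -/
open Polynomial

/-- A function `g : F → F` has degree at most `d` if it agrees with (the evaluation of)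
a univariate polynomial of degree at most `d`. -/
def DegLE {F : Type*} [CommRing F] (d : ℕ) (g : F → F) : Prop :=
  ∃ P : Polynomial F, P.natDegree ≤ d ∧ ∀ x, g x = P.eval x

/-- Membership in the local code `C_{d_x,d_y}`: `f : 𝔽_p³ → 𝔽_p` (curried) restricts to
a polynomial of degree ≤ `d_x` on every axis-parallel line `x ↦ (x,b,c)` and to a
polynomial of degree ≤ `d_y` on every skew line `y ↦ (a,y,ay+c)`. -/
def MemLocalCode (p : ℕ) (dx dy : ℕ) (f : ZMod p → ZMod p → ZMod p → ZMod p) : Prop :=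
  (∀ b c : ZMod p, DegLE dx (fun x => f x b c)) ∧
  (∀ a c : ZMod p, DegLE dy (fun y => f a y (a * y + c)))

namespace VanishingAux

open Finset

/-- The index set: triples `((i,j),K)` with `i,j ≤ e` and `i + j + K ≤ 2e`. -/
def idx (e : ℕ) : Finset ((ℕ × ℕ) × ℕ) :=
  ((range (e+1) ×ˢ range (e+1)) ×ˢ range (2*e+1)).filter
    (fun t => t.1.1 + t.1.2 + t.2 ≤ 2*e)

lemma mem_idx {e : ℕ} {t : (ℕ × ℕ) × ℕ} :
    t ∈ idx e ↔ t.1.1 ≤ e ∧ t.1.2 ≤ e ∧ t.1.1 + t.1.2 + t.2 ≤ 2*e := by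
  simp only [idx, mem_filter, mem_product, mem_range]
  omega

lemma card_idx (e : ℕ) : (idx e).card = (e+1)^3 := by
  classical
  have h1 : (idx e).card
      = ∑ ij ∈ range (e+1) ×ˢ range (e+1), ∑ K ∈ range (2*e+1),
          (if ij.1 + ij.2 + K ≤ 2*e then 1 else 0) := by
    rw [idx, Finset.card_filter, Finset.sum_product]
  have h2 : ∀ ij ∈ range (e+1) ×ˢ range (e+1),
      (∑ K ∈ range (2*e+1), (if ij.1 + ij.2 + K ≤ 2*e then 1 else 0))
        = (e - ij.1) + ((e - ij.2) + 1) := by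
    intro ij hij
    simp only [mem_product, mem_range] at hij
    rw [← Finset.sum_filter]
    have : (range (2*e+1)).filter (fun K => ij.1 + ij.2 + K ≤ 2*e)
        = range (2*e+1 - ij.1 - ij.2) := by
      ext K; simp only [mem_filter, mem_range]; omega
    rw [this]
    simp only [Finset.sum_const, card_range, smul_eq_mul, mul_one]
    omega
  rw [h1, Finset.sum_congr rfl h2, Finset.sum_product]
  have hrefl : (∑ j ∈ range (e+1), (e - j)) = ∑ j ∈ range (e+1), j := by
    have := Finset.sum_range_reflect (fun j => j) (e+1)
    simpa using this
  have hg : (∑ j ∈ range (e+1), j) * 2 = (e+1) * e := by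
    simpa using Finset.sum_range_id_mul_two (e+1)
  set s := ∑ j ∈ range (e+1), j with hs
  have inner : ∀ i, (∑ j ∈ range (e+1), ((e - i) + ((e - j) + 1)))
      = (e+1) * (e - i) + (s + (e+1)) := by
    intro i
    rw [Finset.sum_add_distrib, Finset.sum_add_distrib, Finset.sum_const,
      Finset.sum_const, card_range, hrefl, smul_eq_mul, smul_eq_mul, mul_one]
  calc (∑ i ∈ range (e+1), ∑ j ∈ range (e+1), ((e - i) + ((e - j) + 1)))
      = ∑ i ∈ range (e+1), ((e+1) * (e - i) + (s + (e+1))) :=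
        Finset.sum_congr rfl (fun i _ => inner i)
    _ = (e+1) * (∑ i ∈ range (e+1), (e - i)) + (e+1) * (s + (e+1)) := by
        rw [Finset.sum_add_distrib, Finset.sum_const, card_range, Finset.mul_sum,
          smul_eq_mul]
    _ = (e+1) * (s * 2) + (e+1) * (e+1) := by rw [hrefl]; ring
    _ = (e+1)^3 := by rw [hg]; ring

variable {p : ℕ} [Fact p.Prime]

/-- split exponents: `ll` goes on `(z - x*y)`, `kk` on `z`. -/
def ll (e : ℕ) (t : (ℕ × ℕ) × ℕ) : ℕ := min t.2 (e - t.1.1)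

def kk (e : ℕ) (t : (ℕ × ℕ) × ℕ) : ℕ := t.2 - ll e t

lemma kk_add_ll (e : ℕ) (t : (ℕ × ℕ) × ℕ) : kk e t + ll e t = t.2 := by
  simp only [kk, ll]; omega

lemma deg_x_bound {e : ℕ} {t : (ℕ × ℕ) × ℕ} (ht : t ∈ idx e) :
    t.1.1 + ll e t ≤ e := by
  rw [mem_idx] at ht; simp only [ll]; omega

lemma deg_y_bound {e : ℕ} {t : (ℕ × ℕ) × ℕ} (ht : t ∈ idx e) :
    t.1.2 + kk e t ≤ e := by
  rw [mem_idx] at ht; simp only [kk, ll]; omega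

/-- The codeword associated to coefficients `c`. -/
def E (p e : ℕ) (c : ((ℕ × ℕ) × ℕ) → ZMod p) (x y z : ZMod p) : ZMod p :=
  ∑ t ∈ idx e, c t * x ^ t.1.1 * y ^ t.1.2 * z ^ kk e t * (z - x * y) ^ ll e t

lemma E_sub (p e : ℕ) (c₁ c₂ : ((ℕ × ℕ) × ℕ) → ZMod p) (x y z : ZMod p) :
    E p e (fun t => c₁ t - c₂ t) x y z = E p e c₁ x y z - E p e c₂ x y z := by
  rw [E, E, E, ← Finset.sum_sub_distrib]
  exact Finset.sum_congr rfl (fun t _ => by ring)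

lemma natDegree_lin_le (a b : ZMod p) : (C a - C b * X).natDegree ≤ 1 := by
  refine (natDegree_sub_le _ _).trans ?_
  simp only [natDegree_C, max_le_iff]
  exact ⟨Nat.zero_le _, (natDegree_mul_le).trans (by simp)⟩

lemma natDegree_lin_le' (a b : ZMod p) : (C a * X + C b).natDegree ≤ 1 := by
  refine (natDegree_add_le _ _).trans ?_
  simp only [natDegree_C, max_le_iff]
  exact ⟨(natDegree_mul_le).trans (by simp), Nat.zero_le _⟩

lemma E_mem (e : ℕ) (c : ((ℕ × ℕ) × ℕ) → ZMod p) :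
    MemLocalCode p e e (E p e c) := by
  constructor
  · intro b c'
    refine ⟨∑ t ∈ idx e, C (c t * b ^ t.1.2 * c' ^ kk e t) *
      ((C c' - C b * X) ^ ll e t * X ^ t.1.1), ?_, ?_⟩
    · refine natDegree_sum_le_of_forall_le _ _ (fun t ht => ?_)
      refine natDegree_mul_le.trans ?_
      have h1 : ((C c' - C b * X) ^ ll e t * X ^ t.1.1).natDegree ≤ ll e t + t.1.1 := by
        refine natDegree_mul_le.trans ?_
        gcongr
        · exact (natDegree_pow_le).trans
            (by simpa using Nat.mul_le_mul_left (ll e t) (natDegree_lin_le c' b))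
        · exact natDegree_X_pow_le _
      have := deg_x_bound ht
      simp only [natDegree_C, zero_add]
      omega
    · intro x
      simp only [E, eval_finset_sum]
      refine Finset.sum_congr rfl (fun t _ => ?_)
      simp only [eval_mul, eval_pow, eval_C, eval_X, eval_sub]
      ring
  · intro a c'
    refine ⟨∑ t ∈ idx e, C (c t * a ^ t.1.1 * c' ^ ll e t) *
      ((C a * X + C c') ^ kk e t * X ^ t.1.2), ?_, ?_⟩
    · refine natDegree_sum_le_of_forall_le _ _ (fun t ht => ?_)
      refine natDegree_mul_le.trans ?_
      have h1 : ((C a * X + C c') ^ kk e t * X ^ t.1.2).natDegree ≤ kk e t + t.1.2 := by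
        refine natDegree_mul_le.trans ?_
        gcongr
        · exact (natDegree_pow_le).trans
            (by simpa using Nat.mul_le_mul_left (kk e t) (natDegree_lin_le' a c'))
        · exact natDegree_X_pow_le _
      have := deg_y_bound ht
      simp only [natDegree_C, zero_add]
      omega
    · intro y
      simp only [E, eval_finset_sum]
      refine Finset.sum_congr rfl (fun t _ => ?_)
      simp only [eval_mul, eval_pow, eval_C, eval_X, eval_add]
      have : a * y + c' - a * y = c' := by ring
      rw [this]
      ring

lemma exists_eval_ne (R : Polynomial (ZMod p)) (hR : R ≠ 0) (hdeg : R.natDegree < p) :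
    ∃ z : ZMod p, R.eval z ≠ 0 := by
  by_contra h
  push_neg at h
  refine hR (Polynomial.eq_zero_of_natDegree_lt_card_of_eval_eq_zero' R Finset.univ
    (fun i _ => h i) ?_)
  rwa [Finset.card_univ, ZMod.card]

lemma E_ne_zero (e : ℕ) (hp : 2 * e + 2 ≤ p) (c : ((ℕ × ℕ) × ℕ) → ZMod p)
    (t' : (ℕ × ℕ) × ℕ) (ht' : t' ∈ idx e) (hct' : c t' ≠ 0) :
    E p e c ≠ (fun _ _ _ => 0) := by
  classical
  -- the support and a minimal element in the x-exponent
  set T : Finset ((ℕ × ℕ) × ℕ) := (idx e).filter (fun t => c t ≠ 0) with hT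
  have hTne : T.Nonempty := ⟨t', by simp [hT, ht', hct']⟩
  obtain ⟨t₀, ht₀T, hmin⟩ := T.exists_min_image (fun t => t.1.1) hTne
  have ht₀ : t₀ ∈ idx e := (Finset.mem_filter.1 ht₀T).1
  have hct₀ : c t₀ ≠ 0 := (Finset.mem_filter.1 ht₀T).2
  have hmin' : ∀ t ∈ idx e, c t ≠ 0 → t₀.1.1 ≤ t.1.1 := by
    intro t ht hct
    exact hmin t (Finset.mem_filter.2 ⟨ht, hct⟩)
  -- step 1 : a univariate polynomial in z
  set R : Polynomial (ZMod p) :=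
    ∑ t ∈ (idx e).filter (fun t => t.1 = t₀.1), C (c t) * X ^ t.2 with hR
  have hRcoeff : R.coeff t₀.2 = c t₀ := by
    rw [hR, finset_sum_coeff]
    have hmem : t₀ ∈ (idx e).filter (fun t => t.1 = t₀.1) :=
      Finset.mem_filter.2 ⟨ht₀, rfl⟩
    have hside : ∀ t ∈ (idx e).filter (fun t => t.1 = t₀.1), t ≠ t₀ →
        (C (c t) * X ^ t.2).coeff t₀.2 = 0 := by
      intro t ht hne
      simp only [Finset.mem_filter] at ht
      rw [coeff_C_mul, coeff_X_pow]
      have h2 : ¬ (t.2 = t₀.2) := by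
        intro h2
        exact hne (Prod.ext ht.2 h2)
      rw [if_neg (fun hh : t₀.2 = t.2 => h2 hh.symm), mul_zero]
    rw [Finset.sum_eq_single_of_mem t₀ hmem hside]
    simp
  have hRne : R ≠ 0 := fun h => hct₀ (by rw [← hRcoeff, h, coeff_zero])
  have hRdeg : R.natDegree < p := by
    have : R.natDegree ≤ 2*e := by
      refine natDegree_sum_le_of_forall_le _ _ (fun t ht => ?_)
      have ht2 : t.2 ≤ 2*e := by
        have := mem_idx.1 (Finset.mem_filter.1 ht).1; omega
      refine natDegree_mul_le.trans ?_
      simp only [natDegree_C, zero_add]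
      exact (natDegree_X_pow_le _).trans ht2
    omega
  obtain ⟨z₀, hz₀⟩ := exists_eval_ne R hRne hRdeg
  -- step 2 : a univariate polynomial in y
  set Q : Polynomial (ZMod p) :=
    ∑ t ∈ (idx e).filter (fun t => t.1.1 = t₀.1.1), C (c t * z₀ ^ t.2) * X ^ t.1.2
    with hQ
  have hQcoeff : Q.coeff t₀.1.2 = R.eval z₀ := by
    rw [hQ, finset_sum_coeff, hR, eval_finset_sum]
    have hfil : (idx e).filter (fun t => t.1 = t₀.1)
        = ((idx e).filter (fun t => t.1.1 = t₀.1.1)).filter (fun t => t.1.2 = t₀.1.2) := by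
      rw [Finset.filter_filter]
      refine Finset.filter_congr (fun t _ => ?_)
      simp [Prod.ext_iff]
    calc (∑ t ∈ (idx e).filter (fun t => t.1.1 = t₀.1.1),
            (C (c t * z₀ ^ t.2) * X ^ t.1.2).coeff t₀.1.2)
        = ∑ t ∈ (idx e).filter (fun t => t.1.1 = t₀.1.1),
            (if t.1.2 = t₀.1.2 then c t * z₀ ^ t.2 else 0) := by
          refine Finset.sum_congr rfl (fun t _ => ?_)
          rw [coeff_C_mul, coeff_X_pow]
          by_cases h : t.1.2 = t₀.1.2
          · simp [h]
          · rw [if_neg (fun hh : t₀.1.2 = t.1.2 => h hh.symm), mul_zero, if_neg h]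
      _ = ∑ t ∈ ((idx e).filter (fun t => t.1.1 = t₀.1.1)).filter
            (fun t => t.1.2 = t₀.1.2), (c t * z₀ ^ t.2) := (Finset.sum_filter _ _).symm
      _ = ∑ t ∈ (idx e).filter (fun t => t.1 = t₀.1),
            eval z₀ (C (c t) * X ^ t.2) := by
          rw [← hfil]
          exact Finset.sum_congr rfl (fun t _ => by simp)
  have hQne : Q ≠ 0 := fun h => hz₀ (by rw [← hQcoeff, h, coeff_zero])
  have hQdeg : Q.natDegree < p := by
    have : Q.natDegree ≤ e := by
      refine natDegree_sum_le_of_forall_le _ _ (fun t ht => ?_)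
      have ht2 : t.1.2 ≤ e := (mem_idx.1 (Finset.mem_filter.1 ht).1).2.1
      refine natDegree_mul_le.trans ?_
      simp only [natDegree_C, zero_add]
      exact (natDegree_X_pow_le _).trans ht2
    omega
  obtain ⟨y₀, hy₀⟩ := exists_eval_ne Q hQne hQdeg
  -- step 3 : a univariate polynomial in x
  set F : Polynomial (ZMod p) :=
    ∑ t ∈ idx e, C (c t * y₀ ^ t.1.2 * z₀ ^ kk e t) *
      ((C z₀ - C y₀ * X) ^ ll e t * X ^ t.1.1) with hF
  have hFcoeff : F.coeff t₀.1.1 = Q.eval y₀ := by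
    rw [hF, finset_sum_coeff, hQ, eval_finset_sum]
    calc (∑ t ∈ idx e, (C (c t * y₀ ^ t.1.2 * z₀ ^ kk e t) *
            ((C z₀ - C y₀ * X) ^ ll e t * X ^ t.1.1)).coeff t₀.1.1)
        = ∑ t ∈ idx e,
            (if t.1.1 = t₀.1.1 then c t * y₀ ^ t.1.2 * z₀ ^ t.2 else 0) := by
          refine Finset.sum_congr rfl (fun t ht => ?_)
          rw [coeff_C_mul, coeff_mul_X_pow']
          by_cases hti : t.1.1 = t₀.1.1
          · rw [if_pos hti.le, if_pos hti]
            have h0 : t₀.1.1 - t.1.1 = 0 := by omega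
            rw [h0, coeff_zero_eq_eval_zero]
            simp only [eval_pow, eval_sub, eval_mul, eval_C, eval_X, mul_zero,
              sub_zero]
            rw [← kk_add_ll e t, pow_add]
            ring
          · by_cases hct : c t = 0
            · rw [if_neg hti]
              simp [hct]
            · have hlt : t₀.1.1 < t.1.1 :=
                lt_of_le_of_ne (hmin' t ht hct) (Ne.symm hti)
              rw [if_neg (by omega), mul_zero, if_neg hti]
      _ = ∑ t ∈ (idx e).filter (fun t => t.1.1 = t₀.1.1),
            (c t * y₀ ^ t.1.2 * z₀ ^ t.2) := (Finset.sum_filter _ _).symm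
      _ = ∑ t ∈ (idx e).filter (fun t => t.1.1 = t₀.1.1),
            eval y₀ (C (c t * z₀ ^ t.2) * X ^ t.1.2) := by
          refine Finset.sum_congr rfl (fun t _ => ?_)
          simp only [eval_mul, eval_C, eval_pow, eval_X]
          ring
  have hFne : F ≠ 0 := fun h => hy₀ (by rw [← hFcoeff, h, coeff_zero])
  have hFdeg : F.natDegree < p := by
    have : F.natDegree ≤ e := by
      refine natDegree_sum_le_of_forall_le _ _ (fun t ht => ?_)
      refine natDegree_mul_le.trans ?_
      have h1 : ((C z₀ - C y₀ * X) ^ ll e t * X ^ t.1.1).natDegree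
          ≤ ll e t + t.1.1 := by
        refine natDegree_mul_le.trans ?_
        gcongr
        · exact (natDegree_pow_le).trans
            (by simpa using Nat.mul_le_mul_left (ll e t) (natDegree_lin_le z₀ y₀))
        · exact natDegree_X_pow_le _
      have := deg_x_bound ht
      simp only [natDegree_C, zero_add]
      omega
    omega
  obtain ⟨x₀, hx₀⟩ := exists_eval_ne F hFne hFdeg
  have hval : E p e c x₀ y₀ z₀ = F.eval x₀ := by
    rw [E, hF, eval_finset_sum]
    refine Finset.sum_congr rfl (fun t _ => ?_)
    simp only [eval_mul, eval_pow, eval_C, eval_X, eval_sub]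
    ring
  intro hE
  apply hx₀
  rw [← hval, hE]

end VanishingAux

/-- **Vanishing codewords.** For `p ≥ 2e + 2` prime, every subset `S ⊆ 𝔽_p³` with
`|S| < (e+1)³` admits a nonzero codeword `E ∈ C_{e,e}` vanishing on all of `S`. -/
theorem exists_nonzero_localCode_vanishing (p e : ℕ) [Fact p.Prime]
    (hp : 2 * e + 2 ≤ p) (S : Finset (ZMod p × ZMod p × ZMod p))
    (hS : S.card < (e + 1) ^ 3) :
    ∃ E : ZMod p → ZMod p → ZMod p → ZMod p,
      MemLocalCode p e e E ∧ E ≠ (fun _ _ _ => 0) ∧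
      ∀ s ∈ S, E s.1 s.2.1 s.2.2 = 0 := by
  classical
  open VanishingAux in
  -- extend a coefficient family on the index set to all of `(ℕ × ℕ) × ℕ`
  let ext : (↥(idx e) → ZMod p) → (((ℕ × ℕ) × ℕ) → ZMod p) :=
    fun g t => if h : t ∈ idx e then g ⟨t, h⟩ else 0
  let φ : (↥(idx e) → ZMod p) → (↥S → ZMod p) :=
    fun g s => E p e (ext g) s.1.1 s.1.2.1 s.1.2.2
  have hplt : 1 < p := (Fact.out : p.Prime).one_lt
  have hcard : Fintype.card (↥S → ZMod p) < Fintype.card (↥(idx e) → ZMod p) := by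
    rw [Fintype.card_fun, Fintype.card_fun, ZMod.card, Fintype.card_coe,
      Fintype.card_coe, card_idx]
    exact Nat.pow_lt_pow_right hplt hS
  obtain ⟨g₁, g₂, hg, hφ⟩ := Fintype.exists_ne_map_eq_of_card_lt φ hcard
  set c : ((ℕ × ℕ) × ℕ) → ZMod p := fun t => ext g₁ t - ext g₂ t with hc
  refine ⟨E p e c, E_mem e c, ?_, ?_⟩
  · -- nonzero
    obtain ⟨u, hu⟩ := Function.ne_iff.1 hg
    refine E_ne_zero e hp c u.1 u.2 ?_
    have : ext g₁ u.1 = g₁ u ∧ ext g₂ u.1 = g₂ u := by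
      constructor <;> · simp only [ext, dif_pos u.2]
    rw [hc]
    simp only [this.1, this.2]
    exact sub_ne_zero.2 hu
  · -- vanishing on S
    intro s hs
    have h1 : E p e c s.1 s.2.1 s.2.2
        = E p e (ext g₁) s.1 s.2.1 s.2.2 - E p e (ext g₂) s.1 s.2.1 s.2.2 :=
      E_sub p e (ext g₁) (ext g₂) s.1 s.2.1 s.2.2
    have h2 : φ g₁ ⟨s, hs⟩ = φ g₂ ⟨s, hs⟩ := congrFun hφ ⟨s, hs⟩
    simp only [φ] at h2
    rw [h1, h2, sub_self]
end

section
/- Let q be a prime power, φ ∈ 𝔽_q[t] an irreducible polynomial of degree n ≥ 1, and R = 𝔽_q[t]/(φ). Identify R with 𝔽_q^n via the basis 1, t, …, t^{n−1}, and thereby identify M_3(R) with 𝔽_q^{9n} coordinatewise; let ι : M_3(R) → 𝔽_q^{9n} denote this identification. Let d be a natural number with d < q. Then the 𝔽_q-vector space of functions SL_3(R) → 𝔽_q of the form g ↦ P(ι(g)), where P ranges over polynomials over 𝔽_q in 9n variables of total degree at most d, has dimension at least C(3n + d, d) (the dimension of the Reed–Muller code in 3n variables of degree d). -/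
open Matrix MvPolynomial

/-- The coefficient embedding `ι : M₃(R) → 𝔽_q^{9n}` for `R = 𝔽_q[t]/(φ)`: a matrix is
sent to the coordinates of all nine of its entries with respect to the power basis
`1, t, …, t^{n−1}` of `R` over `𝔽_q`. -/
noncomputable def coeffEmbed {F : Type*} [Field F] (φ : Polynomial F) (hφ : φ ≠ 0)
    (g : Matrix (Fin 3) (Fin 3) (AdjoinRoot φ)) :
    Fin 3 × Fin 3 × Fin φ.natDegree → F :=
  fun x => (AdjoinRoot.powerBasisAux hφ).repr (g x.1 x.2.1) x.2.2

/-- The space of functions `SL₃(R) → 𝔽_q` of the form `g ↦ P(ι(g))` with `P` a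
polynomial in `9n` variables of total degree at most `d`. -/
noncomputable def rmSpace {F : Type*} [Field F] (φ : Polynomial F) (hφ : φ ≠ 0) (d : ℕ) :
    Submodule F (Matrix.SpecialLinearGroup (Fin 3) (AdjoinRoot φ) → F) where
  carrier := {f | ∃ P : MvPolynomial (Fin 3 × Fin 3 × Fin φ.natDegree) F,
    P.totalDegree ≤ d ∧
    ∀ g : Matrix.SpecialLinearGroup (Fin 3) (AdjoinRoot φ),
      f g = MvPolynomial.eval (coeffEmbed φ hφ g.val) P}
  add_mem' := by
    rintro f f' ⟨P, hP, hPe⟩ ⟨Q, hQ, hQe⟩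
    exact ⟨P + Q, le_trans (MvPolynomial.totalDegree_add P Q) (max_le hP hQ),
      fun g => by simp [hPe g, hQe g]⟩
  zero_mem' := ⟨0, by simp, fun g => by simp⟩
  smul_mem' := by
    rintro c f ⟨P, hP, hPe⟩
    exact ⟨c • P, le_trans (MvPolynomial.totalDegree_smul_le c P) hP,
      fun g => by simp [hPe g]⟩

/-
The unitriangular matrices `[[1, x, y], [0, 1, z], [0, 0, 1]]` lie in `SL₃(R)`, so the `3n`
coordinates of the entries above the diagonal take every value in `𝔽_q^{3n}` on `SL₃(R)`.
A polynomial in these coordinates of total degree `≤ d < q` that vanishes on `SL₃(R)` therefore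
vanishes on all of `𝔽_q^{3n}`, and is zero since its degree in each variable is below `q`
(combinatorial Nullstellensatz). So restriction embeds the polynomials of total degree `≤ d` in
`3n` variables into the space, and counting their monomials by stars and bars (with a slack
variable for the missing degree) gives `C(3n + d, d)`.
-/

namespace Finsupp

variable {σ : Type*}

theorem sum_id_option (P : Option σ →₀ ℕ) :
    (P.sum fun _ ↦ id) = P none + P.some.sum fun _ e => e :=
  P.sum_option_index _ (fun _ => rfl) fun _ _ _ => rfl

variable (σ) in
noncomputable def sumEqEquivSumLe (d : ℕ) :
    {P : Option σ →₀ ℕ // (P.sum fun _ ↦ id) = d} ≃ {s : σ →₀ ℕ // (s.sum fun _ e => e) ≤ d} where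
  toFun := fun ⟨P, hP⟩ => ⟨P.some, by have := sum_id_option P; lia⟩
  invFun s := ⟨s.1.optionElim (d - s.1.sum fun _ e => e), by
    rw [sum_id_option, optionElim_apply_none, some_optionElim]; have := s.2; lia⟩
  left_inv := fun ⟨P, hP⟩ => by
    have hnone : d - (P.some.sum fun _ e => e) = P none := by have := sum_id_option P; lia
    simp only [hnone, optionElim_some]
  right_inv s := Subtype.ext (some_optionElim _ _)

theorem natCard_subtype_sum_le [Fintype σ] (d : ℕ) :
    Nat.card {s : σ →₀ ℕ // (s.sum fun _ e => e) ≤ d} = (Fintype.card σ + d).choose d := by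
  classical
  rw [← Nat.card_congr (sumEqEquivSumLe σ d), ← Nat.card_congr (Sym.equivNatSum (Option σ) d),
    Nat.card_eq_fintype_card, Sym.card_sym_eq_choose, Fintype.card_option, Nat.add_right_comm,
    Nat.add_sub_cancel]

end Finsupp

namespace MvPolynomial

theorem finrank_restrictTotalDegree (σ R : Type*) [Fintype σ] [CommRing R] [Nontrivial R]
    (d : ℕ) : Module.finrank R (restrictTotalDegree σ R d) = (Fintype.card σ + d).choose d := by
  rw [restrictTotalDegree, Module.finrank_eq_nat_card_basis (basisRestrictSupport R _)]
  exact Finsupp.natCard_subtype_sum_le d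

theorem eq_zero_of_eval_eq_zero_of_totalDegree_lt {σ K : Type*} [Finite σ] [Field K] [Fintype K]
    {P : MvPolynomial σ K} (hP : P.totalDegree < Fintype.card K) (h : ∀ v, eval v P = 0) :
    P = 0 :=
  eq_zero_of_eval_zero_at_prod_finset P (fun _ => Finset.univ)
    (fun i => (degreeOf_le_totalDegree P i).trans_lt hP) fun v _ => h v

theorem choose_le_finrank_of_surjective {G σ F : Type*} [Finite G] [Fintype σ] [Field F]
    [Fintype F] {π : G → σ → F} (hπ : Function.Surjective π) {d : ℕ} (hd : d < Fintype.card F)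
    (V : Submodule F (G → F)) (hV : ∀ P : MvPolynomial σ F, P.totalDegree ≤ d →
      (fun g => eval (π g) P) ∈ V) :
    (Fintype.card σ + d).choose d ≤ Module.finrank F V := by
  let L : restrictTotalDegree σ F d →ₗ[F] V :=
    (LinearMap.funLeft F F π ∘ₗ evalₗ F σ ∘ₗ (restrictTotalDegree σ F d).subtype).codRestrict V
      fun P => hV P ((mem_restrictTotalDegree _ _ _).mp P.2)
  have hL : Function.Injective L := by
    rw [← LinearMap.ker_eq_bot, LinearMap.ker_eq_bot']
    intro P hP
    have hvan : ∀ v, eval v P.1 = 0 :=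
      hπ.forall.mpr fun g => congr_fun (congr_arg Subtype.val hP) g
    exact Subtype.ext (eq_zero_of_eval_eq_zero_of_totalDegree_lt
      (((mem_restrictTotalDegree _ _ _).mp P.2).trans_lt hd) hvan)
  rw [← finrank_restrictTotalDegree σ F]
  exact LinearMap.finrank_le_finrank_of_injective hL

end MvPolynomial

namespace Matrix.SpecialLinearGroup

variable {R : Type*} [CommRing R]

def unitriangular (x y z : R) : SpecialLinearGroup (Fin 3) R :=
  ⟨!![1, x, y; 0, 1, z; 0, 0, 1], by simp [det_fin_three]⟩

def upperEntry : Fin 3 → Fin 3 × Fin 3 := ![(0, 1), (0, 2), (1, 2)]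

theorem surjective_upperEntries :
    Function.Surjective fun (g : SpecialLinearGroup (Fin 3) R) i =>
      g (upperEntry i).1 (upperEntry i).2 := by
  intro r
  refine ⟨unitriangular (r 0) (r 1) (r 2), funext fun i => ?_⟩
  fin_cases i <;> rfl

end Matrix.SpecialLinearGroup

def upperCoord (n : ℕ) (x : Fin 3 × Fin n) : Fin 3 × Fin 3 × Fin n :=
  ((SpecialLinearGroup.upperEntry x.1).1, (SpecialLinearGroup.upperEntry x.1).2, x.2)

theorem surjective_coeffEmbed_comp_upperCoord {F : Type*} [Field F] (φ : Polynomial F)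
    (hφ : φ ≠ 0) :
    Function.Surjective fun g : SpecialLinearGroup (Fin 3) (AdjoinRoot φ) =>
      coeffEmbed φ hφ g ∘ upperCoord φ.natDegree := by
  intro c
  obtain ⟨g, hg⟩ := SpecialLinearGroup.surjective_upperEntries fun i =>
    (AdjoinRoot.powerBasisAux hφ).equivFun.symm fun k => c (i, k)
  refine ⟨g, funext fun ⟨i, k⟩ => ?_⟩
  simp only [Function.comp_apply, upperCoord, coeffEmbed, ← Module.Basis.equivFun_apply,
    congr_fun hg i, LinearEquiv.apply_symm_apply]

theorem rmSpace_finrank_ge_general {F : Type*} [Field F] [Fintype F] (φ : Polynomial F)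
    (hirr : Irreducible φ) (d : ℕ) (hd : d < Fintype.card F) :
    (3 * φ.natDegree + d).choose d ≤
      Module.finrank F (rmSpace φ hirr.ne_zero d) := by
  have hφ := hirr.ne_zero
  have : Finite (AdjoinRoot φ) := .of_equiv _ (AdjoinRoot.powerBasisAux hφ).equivFun.toEquiv.symm
  have hmem (P : MvPolynomial (Fin 3 × Fin φ.natDegree) F) (hP : P.totalDegree ≤ d) :
      (fun g : SpecialLinearGroup (Fin 3) (AdjoinRoot φ) =>
        eval (coeffEmbed φ hφ g ∘ upperCoord φ.natDegree) P) ∈ rmSpace φ hφ d :=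
    ⟨rename (upperCoord _) P, (totalDegree_rename_le _ P).trans hP,
      fun g => (eval_rename _ _ P).symm⟩
  have key :=
    choose_le_finrank_of_surjective (surjective_coeffEmbed_comp_upperCoord φ hφ) hd _ hmem
  rwa [Fintype.card_prod, Fintype.card_fin, Fintype.card_fin] at key

/-- **Rate of the global code.** For `φ` irreducible of degree `n ≥ 1` over `𝔽_q` and
`d < q`, the space of functions `SL₃(𝔽_q[t]/(φ)) → 𝔽_q` obtained by restricting
`9n`-variate polynomials of total degree at most `d` along the coefficient embedding has
`𝔽_q`-dimension at least `C(3n + d, d)`, the dimension of the Reed–Muller code in `3n`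
variables of degree `d`. -/
theorem rmSpace_finrank_ge {F : Type*} [Field F] [Fintype F] (φ : Polynomial F)
    (hirr : Irreducible φ) (hn : 1 ≤ φ.natDegree) (d : ℕ) (hd : d < Fintype.card F) :
    (3 * φ.natDegree + d).choose d ≤
      Module.finrank F (rmSpace φ hirr.ne_zero d) :=
  rmSpace_finrank_ge_general φ hirr d hd
end
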